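/- arXiv:1006.4438 — 10 statements merged into one kernel-verified Lean document; each statement's English description precedes it below -/
import Mathlib

section
/- Let A₁ be the ℚ-subalgebra of C([0,1], ℝ) consisting of all continuous functions f : [0,1] → ℝ such that f(q) ∈ ℚ for every rational q ∈ [0,1]. Then every maximal ideal of A₁ is of the form {f ∈ A₁ : f(a) = 0} for some a ∈ [0,1]. -/
/-- The ℚ-subalgebra `A₁` of `C([0,1], ℝ)` consisting of the continuous functions mapping
rational points of `[0,1]` to rational values. -/
def A1 : Subalgebra ℚ C(unitInterval, ℝ) where
  carrier := {f | ∀ q : unitInterval, (q : ℝ) ∈ Set.range ((↑) : ℚ → ℝ) →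
      f q ∈ Set.range ((↑) : ℚ → ℝ)}
  mul_mem' := by
    rintro f g hf hg q hq
    obtain ⟨r, hr⟩ := hf q hq
    obtain ⟨s, hs⟩ := hg q hq
    exact ⟨r * s, by push_cast; rw [hr, hs]; simp⟩
  add_mem' := by
    rintro f g hf hg q hq
    obtain ⟨r, hr⟩ := hf q hq
    obtain ⟨s, hs⟩ := hg q hq
    exact ⟨r + s, by push_cast; rw [hr, hs]; simp⟩
  algebraMap_mem' := by
    rintro r q -
    exact ⟨r, rfl⟩

/-- Evaluation at a point as a ring hom on `A1`. -/
def evA (x : unitInterval) : A1 →+* ℝ where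
  toFun f := (f : C(unitInterval, ℝ)) x
  map_one' := rfl
  map_mul' f g := rfl
  map_zero' := rfl
  map_add' f g := rfl

/-- The ideal of functions in `A1` vanishing at `a`. -/
noncomputable def Ja (a : unitInterval) : Ideal A1 := RingHom.ker (evA a)

lemma Ja_ne_top (a : unitInterval) : Ja a ≠ ⊤ := by
  intro h
  have h1 : (1 : A1) ∈ Ja a := h ▸ Submodule.mem_top
  have : (1 : ℝ) = 0 := h1
  norm_num at this

/-- Every maximal ideal of `A₁` is the ideal of functions vanishing at some
point `a ∈ [0,1]`. -/
theorem stmt4 (J : Ideal A1) (hJ : J.IsMaximal) :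
    ∃ a : unitInterval, ∀ f : A1, f ∈ J ↔ (f : C(unitInterval, ℝ)) a = 0 := by
  have hle : ∃ a : unitInterval, J ≤ Ja a := by
    by_contra h
    push_neg at h
    have hex : ∀ a : unitInterval, ∃ f : A1, f ∈ J ∧ (f : C(unitInterval, ℝ)) a ≠ 0 := by
      intro a
      obtain ⟨f, hfJ, hfa⟩ := Set.not_subset.mp (h a)
      exact ⟨f, hfJ, hfa⟩
    choose F hFJ hFne using hex
    -- open cover
    have hcov : (Set.univ : Set unitInterval) ⊆
        ⋃ a : unitInterval, {x | ((F a : C(unitInterval, ℝ)) x) ≠ 0} := by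
      intro x _
      exact Set.mem_iUnion.mpr ⟨x, hFne x⟩
    obtain ⟨t, ht⟩ := isCompact_univ.elim_finite_subcover
      (fun a => {x | ((F a : C(unitInterval, ℝ)) x) ≠ 0})
      (fun a => isOpen_ne.preimage (F a : C(unitInterval, ℝ)).continuous) hcov
    set g : A1 := ∑ a ∈ t, F a * F a with hg
    have hgJ : g ∈ J := Ideal.sum_mem J fun a _ => Ideal.mul_mem_left J _ (hFJ a)
    have hgpos : ∀ x : unitInterval, 0 < (g : C(unitInterval, ℝ)) x := by
      intro x
      obtain ⟨a, hat, hax⟩ := Set.mem_iUnion₂.mp (ht (Set.mem_univ x))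
      have hval : (g : C(unitInterval, ℝ)) x =
          ∑ b ∈ t, ((F b : C(unitInterval, ℝ)) x) * ((F b : C(unitInterval, ℝ)) x) := by
        have h1 : ((∑ b ∈ t, F b * F b : A1) : C(unitInterval, ℝ)) =
            ∑ b ∈ t, ((F b : C(unitInterval, ℝ)) * (F b : C(unitInterval, ℝ))) := by
          simpa using map_sum A1.val (fun b => F b * F b) t
        rw [hg, h1, ContinuousMap.sum_apply]
        simp
      rw [hval]
      apply Finset.sum_pos' (fun b _ => mul_self_nonneg _)
      exact ⟨a, hat, mul_self_pos.mpr hax⟩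
    -- inverse
    have hgne : ∀ x, (g : C(unitInterval, ℝ)) x ≠ 0 := fun x => (hgpos x).ne'
    set ginvC : C(unitInterval, ℝ) :=
      ⟨fun x => ((g : C(unitInterval, ℝ)) x)⁻¹,
        (g : C(unitInterval, ℝ)).continuous.inv₀ hgne⟩ with hginv
    have hmem : ginvC ∈ A1 := by
      intro q hq
      obtain ⟨s, hs⟩ := g.2 q hq
      refine ⟨s⁻¹, ?_⟩
      show (↑(s⁻¹) : ℝ) = ((g : C(unitInterval, ℝ)) q)⁻¹
      rw [← hs, Rat.cast_inv]
    have hone : g * (⟨ginvC, hmem⟩ : A1) = 1 := by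
      apply Subtype.ext
      apply ContinuousMap.ext
      intro x
      show (g : C(unitInterval, ℝ)) x * ((g : C(unitInterval, ℝ)) x)⁻¹ = 1
      exact mul_inv_cancel₀ (hgne x)
    have : (1 : A1) ∈ J := hone ▸ J.mul_mem_right _ hgJ
    exact hJ.ne_top (Ideal.eq_top_iff_one J |>.mpr this)
  obtain ⟨a, ha⟩ := hle
  have heq : J = Ja a := hJ.eq_of_le (Ja_ne_top a) ha
  exact ⟨a, fun f => by rw [heq]; exact Iff.rfl⟩
end

section
/- Let F be a field, A a unital associative F-algebra, S ⊆ F, and r : S → A a pseudo-resolvent family. If r(μ) is a unit in A for some μ ∈ S, then r(λ) is a unit for every λ ∈ S and there exists a ∈ A (namely a = μ·1 − r(μ)⁻¹) such that (λ·1 − a)·r(λ) = 1 and r(λ)·(λ·1 − a) = 1 for all λ ∈ S. -/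
/-- A pseudo-resolvent family `r : S → A` one of whose values is a unit
consists entirely of units and is the resolvent family of the element
`a = μ·1 − r(μ)⁻¹ ∈ A`. -/
theorem stmt6 {F A : Type*} [Field F] [Ring A] [Algebra F A]
    (S : Set F) (r : F → A)
    (hres : ∀ l ∈ S, ∀ m ∈ S, r l - r m = (m - l) • (r l * r m))
    (μ : F) (hμ : μ ∈ S) (hu : IsUnit (r μ)) :
    (∀ l ∈ S, IsUnit (r l)) ∧
    ∃ a : A, a = algebraMap F A μ - (↑hu.unit⁻¹ : A) ∧
      ∀ l ∈ S, (algebraMap F A l - a) * r l = 1 ∧ r l * (algebraMap F A l - a) = 1 := by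
  set u : A := (↑hu.unit⁻¹ : A) with hud
  have hu1 : u * r μ = 1 := by
    rw [hud]; nth_rewrite 2 [← hu.unit_spec]; exact hu.unit.inv_mul
  have hu2 : r μ * u = 1 := by
    rw [hud]; nth_rewrite 1 [← hu.unit_spec]; exact hu.unit.mul_inv
  have key : ∀ l ∈ S, (algebraMap F A l - (algebraMap F A μ - u)) * r l = 1 ∧
      r l * (algebraMap F A l - (algebraMap F A μ - u)) = 1 := by
    intro l hl
    have h1 := hres l hl μ hμ
    have h2 := hres μ hμ l hl
    have hrl : u * r l = 1 - (l - μ) • r l := by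
      calc u * r l = u * (r μ - (r μ - r l)) := by rw [sub_sub_cancel]
        _ = u * (r μ - (l - μ) • (r μ * r l)) := by rw [h2]
        _ = u * r μ - (l - μ) • (u * (r μ * r l)) := by rw [mul_sub, mul_smul_comm]
        _ = 1 - (l - μ) • r l := by rw [hu1, ← mul_assoc, hu1, one_mul]
    have hlr : r l * u = 1 - (l - μ) • r l := by
      calc r l * u = (r μ + (r l - r μ)) * u := by rw [add_sub_cancel]
        _ = (r μ + (μ - l) • (r l * r μ)) * u := by rw [h1]
        _ = r μ * u + (μ - l) • (r l * r μ * u) := by rw [add_mul, smul_mul_assoc]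
        _ = 1 - (l - μ) • r l := by
            rw [hu2, mul_assoc, hu2, mul_one, ← neg_sub l μ, neg_smul]; abel
    constructor
    · have expand : (algebraMap F A l - (algebraMap F A μ - u)) * r l
          = (l - μ) • r l + u * r l := by
        simp only [Algebra.algebraMap_eq_smul_one, sub_mul, smul_mul_assoc, one_mul, sub_smul]
        abel
      rw [expand, hrl]; abel
    · have expand : r l * (algebraMap F A l - (algebraMap F A μ - u))
          = (l - μ) • r l + r l * u := by
        simp only [Algebra.algebraMap_eq_smul_one, mul_sub, mul_smul_comm, mul_one, sub_smul]
        abel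
      rw [expand, hlr]; abel
  refine ⟨fun l hl => ?_, ⟨algebraMap F A μ - u, rfl, key⟩⟩
  obtain ⟨h1, h2⟩ := key l hl
  exact ⟨⟨r l, algebraMap F A l - (algebraMap F A μ - u), h2, h1⟩, rfl⟩
end

section
/- Let F be a field, A a unital associative F-algebra, S ⊆ F, r : S → A a pseudo-resolvent family, and fix α ∈ S. Then: (i) for every λ ∈ S the element 1 + (λ − α)·r(α) is a unit in A and r(λ) = (1 + (λ − α)·r(α))⁻¹ · r(α); (ii) if S̃ = {λ ∈ F : 1 + (λ − α)·r(α) is a unit in A} and r̃ : S̃ → A is defined by r̃(λ) = (1 + (λ − α)·r(α))⁻¹ · r(α), then S ⊆ S̃, r̃ agrees with r on S, and r̃ satisfies the resolvent equation r̃(λ) − r̃(μ) = (μ − λ)·r̃(λ)·r̃(μ) for all λ, μ ∈ S̃. -/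
/-- Every pseudo-resolvent family `(r, S)` is determined on `S` by its value
at any single point `α ∈ S`, and it has a canonical extension to
`S̃ = {λ : 1 + (λ − α)·r(α) is a unit}`, given by `r̃(λ) = (1 + (λ − α)·r(α))⁻¹ · r(α)`,
which again satisfies the resolvent equation. -/
theorem stmt7 {F A : Type*} [Field F] [Ring A] [Algebra F A]
    (S : Set F) (r : F → A)
    (hres : ∀ l ∈ S, ∀ m ∈ S, r l - r m = (m - l) • (r l * r m))
    (α : F) (hα : α ∈ S) :
    (∀ l ∈ S, IsUnit (1 + (l - α) • r α) ∧
      r l = Ring.inverse (1 + (l - α) • r α) * r α) ∧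
    (S ⊆ {l : F | IsUnit (1 + (l - α) • r α)} ∧
      (∀ l ∈ {l : F | IsUnit (1 + (l - α) • r α)}, ∀ m ∈ {l : F | IsUnit (1 + (l - α) • r α)},
        (Ring.inverse (1 + (l - α) • r α) * r α) - (Ring.inverse (1 + (m - α) • r α) * r α) =
          (m - l) • ((Ring.inverse (1 + (l - α) • r α) * r α) *
            (Ring.inverse (1 + (m - α) • r α) * r α)))) := by
  set a := r α with ha
  -- key identities
  have key : ∀ l ∈ S, a - r l = (l - α) • (a * r l) := by
    intro l hl
    have := hres α hα l hl
    simpa using this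
  have key' : ∀ l ∈ S, a - r l = (l - α) • (r l * a) := by
    intro l hl
    have := hres l hl α hα
    have h2 : a - r l = -((α - l) • (r l * a)) := by rw [← this]; abel
    rw [h2, ← neg_smul, neg_sub]
  -- the explicit inverse
  have hinv : ∀ l ∈ S, (1 + (l - α) • a) * (1 - (l - α) • r l) = 1 ∧
      (1 - (l - α) • r l) * (1 + (l - α) • a) = 1 := by
    intro l hl
    set c := l - α with hc
    constructor
    · have e1 : (1 + c • a) * (1 - c • r l)
          = 1 - c • r l + (c • a - (c * c) • (a * r l)) := by
        rw [add_mul, one_mul, mul_sub, mul_one, smul_mul_smul_comm]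
      have e2 : (c * c) • (a * r l) = c • a - c • r l := by
        rw [mul_smul, ← key l hl, smul_sub]
      rw [e1, e2]; abel
    · have e1 : (1 - c • r l) * (1 + c • a)
          = 1 + c • a - (c • r l + (c * c) • (r l * a)) := by
        rw [sub_mul, one_mul, mul_add, mul_one, smul_mul_smul_comm]
      have e2 : (c * c) • (r l * a) = c • a - c • r l := by
        rw [mul_smul, ← key' l hl, smul_sub]
      rw [e1, e2]; abel
    
  have hunit : ∀ l ∈ S, IsUnit (1 + (l - α) • a) := by
    intro l hl
    exact ⟨⟨1 + (l - α) • a, 1 - (l - α) • r l, (hinv l hl).1, (hinv l hl).2⟩, rfl⟩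
  -- u_l * r l = a
  have hmul : ∀ l ∈ S, (1 + (l - α) • a) * r l = a := by
    intro l hl
    rw [add_mul, one_mul, smul_mul_assoc, ← key l hl]; abel
  have hval : ∀ l ∈ S, r l = Ring.inverse (1 + (l - α) • a) * a := by
    intro l hl
    calc r l = 1 * r l := (one_mul _).symm
      _ = Ring.inverse (1 + (l - α) • a) * (1 + (l - α) • a) * r l := by
          rw [Ring.inverse_mul_cancel _ (hunit l hl)]
      _ = Ring.inverse (1 + (l - α) • a) * a := by rw [mul_assoc, hmul l hl]
  refine ⟨fun l hl => ⟨hunit l hl, hval l hl⟩, fun l hl => hunit l hl, ?_⟩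
  -- resolvent equation on the extended set
  intro l hl m hm
  simp only [Set.mem_setOf_eq] at hl hm
  set ul := 1 + (l - α) • a with hul
  set um := 1 + (m - α) • a with hum
  have hcomm : ∀ (b : A) (h : IsUnit b), a * b = b * a → a * Ring.inverse b = Ring.inverse b * a := by
    intro b h hb
    have h1 : Ring.inverse b * (a * b) * Ring.inverse b = Ring.inverse b * (b * a) * Ring.inverse b := by
      rw [hb]
    calc a * Ring.inverse b = Ring.inverse b * (b * a) * Ring.inverse b := by
          rw [← mul_assoc, Ring.inverse_mul_cancel _ h, one_mul]
      _ = Ring.inverse b * (a * b) * Ring.inverse b := h1.symm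
      _ = Ring.inverse b * a := by
          rw [mul_assoc, mul_assoc, Ring.mul_inverse_cancel _ h, mul_one]
  have hcm : a * um = um * a := by
    rw [hum, mul_add, add_mul, mul_one, one_mul, mul_smul_comm, smul_mul_assoc]
  have hcim : a * Ring.inverse um = Ring.inverse um * a := hcomm um hm hcm
  -- main computation
  have hdiff : a * um - ul * a = (m - l) • (a * a) := by
    rw [hum, hul, mul_add, mul_one, add_mul, one_mul, mul_smul_comm, smul_mul_assoc]
    rw [add_sub_add_left_eq_sub, ← sub_smul]
    ring_nf
  have t1 : Ring.inverse ul * (a * um) * Ring.inverse um = Ring.inverse ul * a := by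
    rw [mul_assoc (Ring.inverse ul) (a * um) (Ring.inverse um), mul_assoc a um,
      Ring.mul_inverse_cancel _ hm, mul_one]
  have t2 : Ring.inverse ul * (ul * a) * Ring.inverse um = Ring.inverse um * a := by
    rw [← mul_assoc (Ring.inverse ul) ul a, Ring.inverse_mul_cancel _ hl, one_mul, hcim]
  have t3 : Ring.inverse ul * (a * a) * Ring.inverse um
      = Ring.inverse ul * a * (Ring.inverse um * a) := by
    rw [mul_assoc (Ring.inverse ul) (a * a) (Ring.inverse um), mul_assoc a a, hcim]
    exact (mul_assoc _ _ _).symm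
  calc Ring.inverse ul * a - Ring.inverse um * a
      = Ring.inverse ul * (a * um - ul * a) * Ring.inverse um := by
        rw [mul_sub, sub_mul, t1, t2]
    _ = (m - l) • (Ring.inverse ul * (a * a) * Ring.inverse um) := by
        rw [hdiff, mul_smul_comm, smul_mul_assoc]
    _ = (m - l) • (Ring.inverse ul * a * (Ring.inverse um * a)) := by rw [t3]
end

section
/- Let F be a field, A a unital associative F-algebra, J a two-sided ideal of A, and S ⊆ F. Let r₁ : S → A and r₂ : S → A be two pseudo-resolvent families. If r₁(λ₀) − r₂(λ₀) ∈ J for some λ₀ ∈ S, then r₁(λ) − r₂(λ) ∈ J for every λ ∈ S. -/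
/-- If two pseudo-resolvent families on the same set `S` have difference
lying in a two-sided ideal `J` at one point of `S`, then their difference lies in `J` at
every point of `S`. -/
theorem stmt8 {F A : Type*} [Field F] [Ring A] [Algebra F A]
    (J : TwoSidedIdeal A) (S : Set F) (r₁ r₂ : F → A)
    (h₁ : ∀ l ∈ S, ∀ m ∈ S, r₁ l - r₁ m = (m - l) • (r₁ l * r₁ m))
    (h₂ : ∀ l ∈ S, ∀ m ∈ S, r₂ l - r₂ m = (m - l) • (r₂ l * r₂ m))
    (l₀ : F) (hl₀ : l₀ ∈ S) (h : r₁ l₀ - r₂ l₀ ∈ J) :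
    ∀ l ∈ S, r₁ l - r₂ l ∈ J := by
  intro l hl
  set a := r₁ l with ha
  set b := r₂ l with hb
  set c := r₁ l₀ with hc
  set d := r₂ l₀ with hd
  set t := l₀ - l with ht
  have e1 : a - c = t • (a * c) := h₁ l hl l₀ hl₀
  have e2 : b - d = t • (d * b) := by
    have h' : d - b = (l - l₀) • (d * b) := h₂ l₀ hl₀ l hl
    have hbd : b - d = -(d - b) := by abel
    rw [hbd, h', ← neg_smul, neg_sub]
  -- key: a*d - c*b = t • (a * ((c - d) * b))
  have kc : c = a - t • (a * c) := by rw [← e1]; abel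
  have kd : d = b - t • (d * b) := by rw [← e2]; abel
  have key : a * d - c * b = t • (a * ((c - d) * b)) := by
    calc a * d - c * b
        = a * (b - t • (d * b)) - (a - t • (a * c)) * b := by rw [← kc, ← kd]
      _ = t • (a * c * b) - t • (a * (d * b)) := by
          rw [mul_sub, sub_mul, mul_smul_comm, smul_mul_assoc]; abel
      _ = t • (a * ((c - d) * b)) := by
          rw [← smul_sub]; congr 1; noncomm_ring
  have main : a - b = (c - d) + t • (a * (c - d)) + t • ((c - d) * b)
      + t • (t • (a * ((c - d) * b))) := by
    calc a - b = (a - c) - (b - d) + (c - d) := by abel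
      _ = t • (a * c) - t • (d * b) + (c - d) := by rw [e1, e2]
      _ = t • (a * c - a * d) + t • (a * d - c * b) + t • (c * b - d * b) + (c - d) := by
          rw [← smul_add, ← smul_add]; congr 1; module
      _ = t • (a * (c - d)) + t • (a * d - c * b) + t • ((c - d) * b) + (c - d) := by
          rw [mul_sub, sub_mul]
      _ = (c - d) + t • (a * (c - d)) + t • ((c - d) * b)
          + t • (t • (a * ((c - d) * b))) := by rw [key]; abel
  rw [main]
  have hsmul : ∀ x ∈ J, t • x ∈ J := fun x hx => by
    rw [Algebra.smul_def]; exact J.mul_mem_left _ _ hx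
  exact J.add_mem (J.add_mem (J.add_mem h (hsmul _ (J.mul_mem_left _ _ h)))
    (hsmul _ (J.mul_mem_right _ _ h))) (hsmul _ (hsmul _ (J.mul_mem_left _ _ (J.mul_mem_right _ _ h))))
end

section
/- Let F be a field, A a unital associative F-algebra, J a proper two-sided ideal of A, and n ≥ 2. Let a₁, …, aₙ ∈ A satisfy a_r·a_s ∈ J for all r ≠ s, and put a = a₁ + ⋯ + aₙ. Then, denoting by π : A → A/J the quotient map, spec(π(a)) ∪ {0} = ⋃_{r=1}^{n} spec(π(a_r)), where the spectra are computed in the quotient algebra A/J. -/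
/-!
For `μ ≠ 0` and `x, y` with `x y = y x = 0`, `(μ - x)(μ - y) = μ (μ - (x + y))` and the two factors
commute, so `μ - (x + y)` is invertible iff both `μ - x` and `μ - y` are; by induction, `μ - ∑ bᵣ`
is invertible iff every `μ - bᵣ` is. The value `0` lies in some `spec bᵣ` because `b₁ b₂ = 0`
forbids `b₁` and `b₂` from both being units in a nontrivial ring.
-/

/-- The quotient of a unital associative `F`-algebra by a two-sided ideal is again a unital
`F`-algebra, with structure map the composition of the quotient map with `algebraMap F A`. -/
noncomputable instance quotAlgebra {F A : Type*} [Field F] [Ring A] [Algebra F A]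
    (J : TwoSidedIdeal A) : Algebra F J.ringCon.Quotient :=
  (J.ringCon.mk'.comp (algebraMap F A)).toAlgebra' (by
    intro c x
    induction x using Quotient.ind with
    | _ y =>
      show J.ringCon.mk' (algebraMap F A c) * J.ringCon.mk' y =
        J.ringCon.mk' y * J.ringCon.mk' (algebraMap F A c)
      rw [← map_mul, ← map_mul, Algebra.commutes])

section Orthogonal

variable {R : Type*} [Ring R]

theorem isUnit_sub_add_iff_of_mul_eq_zero {c x y : R} (hc : IsUnit c) (hcx : Commute c x)
    (hcy : Commute c y) (hxy : x * y = 0) (hyx : y * x = 0) :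
    IsUnit (c - (x + y)) ↔ IsUnit (c - x) ∧ IsUnit (c - y) := by
  have hprod : (c - x) * (c - y) = c * (c - (x + y)) := by
    simp only [sub_mul, mul_sub, mul_add, hxy, ← hcx.eq]
    abel
  have hcomm : Commute (c - x) (c - y) := by
    simp only [Commute, SemiconjBy, sub_mul, mul_sub, hxy, hyx, ← hcx.eq, ← hcy.eq]
    abel
  rw [← hcomm.isUnit_mul_iff, hprod, hc.mul_left_iff]

theorem isUnit_sub_sum_iff_of_pairwise_mul_eq_zero {ι : Type*} {c : R} {b : ι → R}
    (hc : IsUnit c) (hcb : ∀ i, Commute c (b i)) (hb : Pairwise fun i j => b i * b j = 0)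
    (s : Finset ι) :
    IsUnit (c - ∑ i ∈ s, b i) ↔ ∀ i ∈ s, IsUnit (c - b i) := by
  classical
  induction s using Finset.induction_on with
  | empty => simpa using hc
  | insert j s hj ih =>
    have hne : ∀ i ∈ s, j ≠ i := fun i hi hji => hj (hji ▸ hi)
    have hjs : b j * ∑ i ∈ s, b i = 0 := by
      rw [Finset.mul_sum]; exact Finset.sum_eq_zero fun i hi => hb (hne i hi)
    have hsj : (∑ i ∈ s, b i) * b j = 0 := by
      rw [Finset.sum_mul]; exact Finset.sum_eq_zero fun i hi => hb (hne i hi).symm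
    rw [Finset.sum_insert hj, Finset.forall_mem_insert, ← ih,
      isUnit_sub_add_iff_of_mul_eq_zero hc (hcb j) (Commute.sum_right _ _ _ fun i _ => hcb i)
        hjs hsj]

end Orthogonal

section Spectrum

variable {F R ι : Type*} [Field F] [Ring R] [Algebra F R] {b : ι → R}

theorem mem_spectrum_sum_iff_of_pairwise_mul_eq_zero (hb : Pairwise fun i j => b i * b j = 0)
    {μ : F} (hμ : μ ≠ 0) (s : Finset ι) :
    μ ∈ spectrum F (∑ i ∈ s, b i) ↔ ∃ i ∈ s, μ ∈ spectrum F (b i) := by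
  simp only [spectrum.mem_iff]
  rw [isUnit_sub_sum_iff_of_pairwise_mul_eq_zero ((isUnit_iff_ne_zero.2 hμ).map _)
    (fun i => Algebra.commutes μ (b i)) hb s]
  simp only [not_forall, exists_prop]

theorem exists_zero_mem_spectrum_of_mul_eq_zero [Nontrivial R] {i j : ι} (hij : b i * b j = 0) :
    ∃ k, (0 : F) ∈ spectrum F (b k) := by
  simp only [spectrum.zero_mem_iff]
  by_contra! hunit
  exact not_isUnit_zero (hij ▸ (hunit i).mul (hunit j))

theorem spectrum_sum_union_zero_of_pairwise_mul_eq_zero [Fintype ι] [Nontrivial R]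
    (hb : Pairwise fun i j => b i * b j = 0) {i j : ι} (hij : i ≠ j) :
    spectrum F (∑ i, b i) ∪ {0} = ⋃ i, spectrum F (b i) := by
  ext μ
  simp only [Set.mem_union, Set.mem_singleton_iff, Set.mem_iUnion]
  rcases eq_or_ne μ 0 with rfl | hμ
  · simpa using exists_zero_mem_spectrum_of_mul_eq_zero (hb hij)
  · simpa [hμ] using mem_spectrum_sum_iff_of_pairwise_mul_eq_zero hb hμ Finset.univ

end Spectrum

/-- Let `J` be a proper two-sided ideal of a unital associative `F`-algebra
`A`, `n ≥ 2`, and `a₁, …, aₙ ∈ A` with `a_r · a_s ∈ J` whenever `r ≠ s`.  Writing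
`π : A → A/J` for the quotient map and `a = a₁ + ⋯ + aₙ`, one has
`spec(π a) ∪ {0} = ⋃ᵣ spec(π aᵣ)`, the spectra being computed in `A/J`. -/
theorem stmt9 {F A : Type*} [Field F] [Ring A] [Algebra F A]
    (J : TwoSidedIdeal A) (hJ : J ≠ ⊤) (n : ℕ) (hn : 2 ≤ n)
    (a : Fin n → A) (h : ∀ r s : Fin n, r ≠ s → a r * a s ∈ J) :
    spectrum F (J.ringCon.mk' (∑ r, a r)) ∪ {0} =
      ⋃ r : Fin n, spectrum F (J.ringCon.mk' (a r)) := by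
  have : Nontrivial J.ringCon.Quotient :=
    RingCon.nontrivial_quotient.2 fun hJ' => hJ (TwoSidedIdeal.ringCon_injective hJ')
  have hπ : ∀ r s : Fin n, r ≠ s → J.ringCon.mk' (a r) * J.ringCon.mk' (a s) = 0 := by
    intro r s hrs
    rw [← map_mul, ← TwoSidedIdeal.mem_ker, TwoSidedIdeal.ker_ringCon_mk']
    exact h r s hrs
  rw [map_sum]
  exact spectrum_sum_union_zero_of_pairwise_mul_eq_zero hπ
    (i := ⟨0, by omega⟩) (j := ⟨1, by omega⟩) (by simp)
end

section
/- Let F be a field, n, m ≥ 1, and let P be a monic polynomial of degree m with coefficients in the matrix algebra M(n, F) (equivalently, an n×n matrix with polynomial entries whose leading term is xᵐ·I). Suppose the determinant of P, as a polynomial in F[X] of degree mn, has mn distinct roots in F. Then there exist matrices C₁, …, C_m ∈ M(n, F) such that P(x) = (x·I − C₁)·(x·I − C₂)⋯(x·I − C_m) for all x ∈ F (an identity of matrix polynomials). -/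
/-!
Let `M` be `P` read as a polynomial matrix, `d = deg P`. The kernels of the matrices `M(x)`,
`x ∈ s`, span `Fⁿ`: otherwise compressing `M` to their span `W` (of dimension `k < n`) gives a
`k × k` polynomial matrix with leading coefficient `1`, whose determinant has degree `dk < dn`
but still vanishes on all of `s`. So there is a basis `vᵢ` with `M(λᵢ) vᵢ = 0`, `λᵢ ∈ s`, and the
matrix `A` with `A vᵢ = λᵢ vᵢ` is a right root of `P`, i.e. `P = Q (X − A)`. Then
`det M = det Q · charpoly A`, and `charpoly A` has at most `n` roots, so `Q` inherits the
hypothesis with `d − 1` in place of `d`.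
-/

open Polynomial Matrix

namespace Polynomial

/-- Over a noncommutative ring `p.eval c = ∑ aᵣ cʳ` puts the coefficients on the left, which
makes `X - C c` a right factor. -/
theorem exists_eq_mul_X_sub_C_add_C_eval {R : Type*} [Ring R] (p : R[X]) (c : R) :
    ∃ q : R[X], p = q * (X - C c) + C (p.eval c) := by
  induction p using Polynomial.induction_on' with
  | add p₁ p₂ h₁ h₂ =>
    obtain ⟨q₁, hq₁⟩ := h₁
    obtain ⟨q₂, hq₂⟩ := h₂
    refine ⟨q₁ + q₂, ?_⟩
    rw [eval_add, C_add, add_mul]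
    nth_rw 1 [hq₁, hq₂]
    abel
  | monomial r a =>
    refine ⟨C a * ∑ i ∈ Finset.range r, X ^ i * C c ^ (r - 1 - i), ?_⟩
    rw [mul_assoc, (commute_X (C c)).geom_sum₂_mul, eval_monomial,
      ← C_mul_X_pow_eq_monomial, C_mul, C_pow]
    noncomm_ring

theorem card_le_card_filter_isRoot_add_natDegree {F : Type*} [Field F] [DecidableEq F]
    {p q : F[X]} (hq : q ≠ 0) {s : Finset F} (hs : ∀ x ∈ s, (p * q).IsRoot x) :
    s.card ≤ (s.filter p.IsRoot).card + q.natDegree := by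
  have hnot : (s.filter (¬ p.IsRoot ·)).card ≤ q.natDegree := by
    refine card_le_degree_of_subset_roots fun x hx => (mem_roots hq).2 ?_
    obtain ⟨hxs, hxp⟩ := Finset.mem_filter.1 hx
    exact (root_mul.1 (hs x hxs)).resolve_left hxp
  rw [← Finset.card_filter_add_card_filter_not p.IsRoot]
  omega

end Polynomial

namespace Matrix

variable {R : Type*} [CommRing R] {ι κ : Type*} [Fintype ι]

theorem map_coeff_map_C_mul_mul_map_C [Fintype κ] (A : Matrix κ ι R) (M : Matrix ι ι R[X])
    (B : Matrix ι κ R) (r : ℕ) :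
    (A.map C * M * B.map C).map (coeff · r) = A * M.map (coeff · r) * B := by
  ext i j
  simp only [mul_apply, map_apply, finsetSum_coeff, coeff_mul_C, coeff_C_mul]

theorem map_eval_map_C_mul_mul_map_C [Fintype κ] (A : Matrix κ ι R) (M : Matrix ι ι R[X])
    (B : Matrix ι κ R) (x : R) :
    (A.map C * M * B.map C).map (eval x) = A * M.map (eval x) * B := by
  ext i j
  simp only [mul_apply, map_apply, eval_finsetSum, eval_mul, eval_C]

variable [DecidableEq ι]

theorem eval_det_eq_det_map (M : Matrix ι ι R[X]) (x : R) :
    M.det.eval x = (M.map (eval x)).det :=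
  RingHom.map_det (evalRingHom x) M

theorem natDegree_det_le {M : Matrix ι ι R[X]} {d : ℕ} (h : ∀ i j, (M i j).natDegree ≤ d) :
    M.det.natDegree ≤ Fintype.card ι * d := by
  rw [det_apply]
  refine natDegree_sum_le_of_forall_le _ _ fun σ _ => ?_
  calc (Equiv.Perm.sign σ • ∏ i, M (σ i) i).natDegree ≤ (∏ i, M (σ i) i).natDegree := by
        rcases Int.units_eq_one_or (Equiv.Perm.sign σ) with hσ | hσ <;> simp [hσ]
    _ ≤ ∑ i, (M (σ i) i).natDegree := natDegree_prod_le _ _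
    _ ≤ Fintype.card ι * d :=
        (Finset.sum_le_card_nsmul _ _ d fun i _ => h _ _).trans_eq (by simp)

theorem coeff_det_of_natDegree_le {M : Matrix ι ι R[X]} {d : ℕ}
    (h : ∀ i j, (M i j).natDegree ≤ d) :
    M.det.coeff (Fintype.card ι * d) = (M.map (coeff · d)).det := by
  simp only [det_apply, finsetSum_coeff, coeff_smul]
  refine Finset.sum_congr rfl fun σ _ => ?_
  rw [← Finset.card_univ, coeff_prod_of_natDegree_le (h := fun i _ => h _ _)]
  rfl

theorem isMonicOfDegree_det [Nontrivial R] {M : Matrix ι ι R[X]} {d : ℕ}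
    (h : ∀ i j, (M i j).natDegree ≤ d) (hlead : M.map (coeff · d) = 1) :
    IsMonicOfDegree M.det (Fintype.card ι * d) :=
  (isMonicOfDegree_iff _ _).2
    ⟨natDegree_det_le h, by rw [coeff_det_of_natDegree_le h, hlead, det_one]⟩

theorem map_coeff_matPolyEquiv_symm (P : (Matrix ι ι R)[X]) (r : ℕ) :
    (matPolyEquiv.symm P).map (coeff · r) = P.coeff r := by
  ext i j
  rw [map_apply, ← matPolyEquiv_coeff_apply, AlgEquiv.apply_symm_apply]

theorem eval_mulVec_of_mulVec_eq_smul (p : (Matrix ι ι R)[X]) {A : Matrix ι ι R}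
    {v : ι → R} {μ : R} (h : A *ᵥ v = μ • v) :
    p.eval A *ᵥ v = p.eval (scalar ι μ) *ᵥ v := by
  have hpow : ∀ B : Matrix ι ι R, B *ᵥ v = μ • v → ∀ r : ℕ, B ^ r *ᵥ v = μ ^ r • v := by
    intro B hB r
    induction r with
    | zero => simp
    | succ r ih => rw [pow_succ, ← mulVec_mulVec, hB, mulVec_smul, ih, smul_smul, pow_succ']
  induction p using Polynomial.induction_on' with
  | add p q hp hq => simp only [eval_add, add_mulVec, hp, hq]
  | monomial r a =>
    simp only [eval_monomial, ← mulVec_mulVec, hpow A h,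
      hpow (scalar ι μ) (by ext; simp [mulVec_diagonal]) r]

variable {F : Type*} [Field F]

theorem span_setOf_map_eval_mulVec_eq_zero {M : Matrix ι ι F[X]} {d : ℕ} (hd : 0 < d)
    (hdeg : ∀ i j, (M i j).natDegree ≤ d) (hlead : M.map (coeff · d) = 1) {s : Finset F}
    (hs : d * Fintype.card ι ≤ s.card) (hroots : ∀ x ∈ s, M.det.IsRoot x) :
    Submodule.span F {v | ∃ x ∈ s, M.map (eval x) *ᵥ v = 0} = ⊤ := by
  set W := Submodule.span F {v | ∃ x ∈ s, M.map (eval x) *ᵥ v = 0}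
  by_contra hW
  set k := Module.finrank F W
  have hk : k < Fintype.card ι := by simpa using Submodule.finrank_lt hW
  let incl : (Fin k → F) →ₗ[F] ι → F :=
    W.subtype ∘ₗ (Module.finBasis F W).equivFun.symm.toLinearMap
  have hincl : Function.Injective incl := W.injective_subtype.comp (LinearEquiv.injective _)
  have hrange : LinearMap.range incl = W := by
    rw [LinearMap.range_comp, LinearEquiv.range, Submodule.map_top, Submodule.range_subtype]
  obtain ⟨proj, hproj⟩ := incl.exists_leftInverse_of_injective (LinearMap.ker_eq_bot.2 hincl)
  set A := LinearMap.toMatrix' proj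
  set B := LinearMap.toMatrix' incl
  have hAB : A * B = 1 := by
    rw [← LinearMap.toMatrix'_comp, hproj, LinearMap.toMatrix'_id]
  set N := A.map C * M * B.map C
  have hN : IsMonicOfDegree N.det (Fintype.card (Fin k) * d) := by
    refine isMonicOfDegree_det (fun i j => natDegree_le_iff_coeff_eq_zero.2 fun r hr => ?_) ?_
    · have hMr : M.map (coeff · r) = 0 := by
        ext a b
        exact coeff_eq_zero_of_natDegree_lt ((hdeg a b).trans_lt hr)
      rw [← map_apply (f := (coeff · r)), map_coeff_map_C_mul_mul_map_C, hMr]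
      simp
    · rw [map_coeff_map_C_mul_mul_map_C, hlead, Matrix.mul_one, hAB]
  have hNroots : ∀ x ∈ s, N.det.IsRoot x := by
    intro x hx
    obtain ⟨v, hv0, hv⟩ :=
      exists_mulVec_eq_zero_iff.2 ((eval_det_eq_det_map M x).symm.trans (hroots x hx))
    obtain ⟨u, rfl⟩ : v ∈ LinearMap.range incl :=
      hrange ▸ Submodule.subset_span ⟨x, hx, hv⟩
    rw [IsRoot, eval_det_eq_det_map, map_eval_map_C_mul_mul_map_C, ← exists_mulVec_eq_zero_iff]
    refine ⟨u, fun hu => hv0 (by simp [hu]), ?_⟩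
    rw [← mulVec_mulVec, ← mulVec_mulVec, LinearMap.toMatrix'_mulVec incl, hv, mulVec_zero]
  have hcard : s.card ≤ N.det.natDegree :=
    card_le_degree_of_subset_roots fun x hx => (mem_roots hN.ne_zero).2 (hNroots x hx)
  rw [hN.natDegree_eq, Fintype.card_fin, mul_comm] at hcard
  have := Nat.mul_lt_mul_of_pos_left hk hd
  omega

theorem exists_eq_mul_X_sub_C_of_card_le {P : (Matrix ι ι F)[X]} {d : ℕ}
    (hP : IsMonicOfDegree P d) (hd : 0 < d) {s : Finset F} (hs : d * Fintype.card ι ≤ s.card)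
    (hroots : ∀ x ∈ s, (matPolyEquiv.symm P).det.IsRoot x) :
    ∃ Q A, P = Q * (X - C A) := by
  set M := matPolyEquiv.symm P
  have hMcoeff : ∀ r, M.map (coeff · r) = P.coeff r := map_coeff_matPolyEquiv_symm P
  have hMeval : ∀ x, M.map (eval x) = P.eval (scalar ι x) := fun x => by
    rw [← matPolyEquiv_eval_eq_map, AlgEquiv.apply_symm_apply]
  have hdeg : ∀ i j, (M i j).natDegree ≤ d := fun i j =>
    natDegree_le_iff_coeff_eq_zero.2 fun r hr => by
      rw [← map_apply (f := (coeff · r)), hMcoeff,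
        coeff_eq_zero_of_natDegree_lt (hP.natDegree_eq ▸ hr), zero_apply]
  have hlead : M.map (coeff · d) = 1 := by
    rw [hMcoeff, ← hP.natDegree_eq, hP.monic.coeff_natDegree]
  have hspan := span_setOf_map_eval_mulVec_eq_zero hd hdeg hlead hs hroots
  let b := Module.Basis.ofSpan hspan.ge
  choose μ hμs hμ using fun i => Module.Basis.ofSpan_subset hspan.ge ⟨i, rfl⟩
  set A := LinearMap.toMatrix' (b.constr F fun i => μ i • b i)
  have hA : ∀ i, A *ᵥ b i = μ i • b i := fun i => by
    rw [LinearMap.toMatrix'_mulVec, b.constr_basis]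
  have hPA : P.eval A = 0 := by
    refine Matrix.toLin'.injective (b.ext fun i => ?_)
    rw [toLin'_apply, eval_mulVec_of_mulVec_eq_smul P (hA i), ← hMeval, hμ i, map_zero,
      LinearMap.zero_apply]
  obtain ⟨Q, hQ⟩ := exists_eq_mul_X_sub_C_add_C_eval P A
  exact ⟨Q, A, by rwa [hPA, C_0, add_zero] at hQ⟩

theorem exists_eq_prod_X_sub_C_of_card_le {m : ℕ} {P : (Matrix ι ι F)[X]}
    (hP : IsMonicOfDegree P m) {s : Finset F} (hs : m * Fintype.card ι ≤ s.card)
    (hroots : ∀ x ∈ s, (matPolyEquiv.symm P).det.IsRoot x) :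
    ∃ c : Fin m → Matrix ι ι F, P = (List.ofFn fun i => X - C (c i)).prod := by
  classical
  induction m generalizing P s with
  | zero => exact ⟨Fin.elim0, by simpa using isMonicOfDegree_zero_iff.1 hP⟩
  | succ m ih =>
    obtain ⟨Q, A, rfl⟩ := exists_eq_mul_X_sub_C_of_card_le hP m.succ_pos hs hroots
    have : Nontrivial (Matrix ι ι F) := by
      by_contra h
      rw [not_nontrivial_iff_subsingleton] at h
      simp at hP
    have hQ : IsMonicOfDegree Q m := (isMonicOfDegree_X_sub_one A).of_mul_right hP
    have hdet : (matPolyEquiv.symm (Q * (X - C A))).det =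
        (matPolyEquiv.symm Q).det * A.charpoly := by
      rw [map_mul, det_mul, ← matPolyEquiv_charmatrix, AlgEquiv.symm_apply_apply]
      rfl
    have hcard := card_le_card_filter_isRoot_add_natDegree A.charpoly_monic.ne_zero (hdet ▸ hroots)
    rw [charpoly_natDegree_eq_dim] at hcard
    rw [Nat.succ_mul] at hs
    obtain ⟨c, hc⟩ := ih hQ (s := s.filter _) (by omega) fun x hx => (Finset.mem_filter.1 hx).2
    exact ⟨Fin.snoc c A, by rw [List.ofFn_succ', List.prod_concat]; simp [hc]⟩

end Matrix

theorem stmt12_general {F : Type*} [Field F] (n m : ℕ)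
    (P : Polynomial (Matrix (Fin n) (Fin n) F))
    (hmonic : P.Monic) (hdeg : P.natDegree = m)
    (hroots : ∃ s : Finset F, s.card = m * n ∧
      ∀ x ∈ s, ((matPolyEquiv.symm P).det).IsRoot x) :
    ∃ C : Fin m → Matrix (Fin n) (Fin n) F,
      P = (List.ofFn fun i => (X : Polynomial (Matrix (Fin n) (Fin n) F)) - Polynomial.C (C i)).prod := by
  obtain ⟨s, hs, hsroots⟩ := hroots
  exact exists_eq_prod_X_sub_C_of_card_le ⟨hdeg, hmonic⟩ (by rw [hs, Fintype.card_fin]) hsroots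

/-- Let `P` be a monic polynomial of degree `m` with coefficients in
`M(n, F)`.  If its determinant (a monic polynomial of degree `m·n` in `F[X]`, obtained via
the canonical identification of matrix polynomials with polynomial matrices) has `m·n`
distinct roots in `F`, then `P` factors as a product of linear factors
`P = (X·I − C₁)(X·I − C₂)⋯(X·I − C_m)` with `C₁, …, C_m ∈ M(n, F)`. -/
theorem stmt12 {F : Type*} [Field F] (n m : ℕ) (hn : 1 ≤ n) (hm : 1 ≤ m)
    (P : Polynomial (Matrix (Fin n) (Fin n) F))
    (hmonic : P.Monic) (hdeg : P.natDegree = m)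
    (hroots : ∃ s : Finset F, s.card = m * n ∧
      ∀ x ∈ s, ((matPolyEquiv.symm P).det).IsRoot x) :
    ∃ C : Fin m → Matrix (Fin n) (Fin n) F,
      P = (List.ofFn fun i => (X : Polynomial (Matrix (Fin n) (Fin n) F)) - Polynomial.C (C i)).prod :=
  stmt12_general n m P hmonic hdeg hroots
end

section
/- Let R be a unital ring whose center C is a field (i.e., every nonzero element of C is invertible in R with inverse in C). Let a, b, a′, b′ ∈ R and suppose that (x − a)·(x − b) = (x − a′)·(x − b′) for all x ∈ R. Then either (a′ = a and b′ = b), or a − b ∈ C and (a′ = b and b′ = a). In particular, the factorization of the quadratic map x ↦ (x − a)(x − b) is unique unless a − b is central, in which case (x − a)(x − b) = (x − b)(x − a) for all x and these are the only two factorizations. -/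
/-- Let `R` be a unital ring whose center `C` is a field (every nonzero
central element has an inverse, which is again central).  If
`(x − a)(x − b) = (x − a′)(x − b′)` for all `x ∈ R`, then either `a′ = a` and `b′ = b`, or
`a − b ∈ C`, `a′ = b` and `b′ = a`; and whenever `a − b ∈ C` one indeed also has the second
factorization `(x − a)(x − b) = (x − b)(x − a)` for all `x`. -/
theorem stmt14 {R : Type*} [Ring R]
    (hC : ∀ c ∈ Set.center R, c ≠ 0 → ∃ d ∈ Set.center R, c * d = 1 ∧ d * c = 1)
    (a b a' b' : R)
    (h : ∀ x : R, (x - a) * (x - b) = (x - a') * (x - b')) :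
    ((a' = a ∧ b' = b) ∨ (a - b ∈ Set.center R ∧ a' = b ∧ b' = a)) ∧
    (a - b ∈ Set.center R → ∀ x : R, (x - a) * (x - b) = (x - b) * (x - a)) := by
  have E : ∀ x : R, x * (b' - b) + (a' - a) * x + (a * b - a' * b') = 0 := by
    intro x
    have h1 : (x - a) * (x - b) - (x - a') * (x - b') = 0 := sub_eq_zero.mpr (h x)
    calc x * (b' - b) + (a' - a) * x + (a * b - a' * b')
        = (x - a) * (x - b) - (x - a') * (x - b') := by noncomm_ring
      _ = 0 := h1
  have h0 : a * b = a' * b' := by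
    have := E 0
    simp at this
    exact sub_eq_zero.mp this
  have h1 : a + b = a' + b' := by
    have s := E 1
    rw [h0, sub_self, add_zero, one_mul, mul_one] at s
    calc a + b = (a + b) + (b' - b + (a' - a)) := by rw [s, add_zero]
      _ = a' + b' := by abel
  have hbb' : b - b' = a' - a := by
    have s : b - b' = (a + b) - (a + b') := by abel
    rw [h1] at s
    calc b - b' = (a' + b') - (a + b') := s
      _ = a' - a := by abel
  have hcent : ∀ x : R, x * (a' - a) = (a' - a) * x := by
    intro x
    have s := E x
    rw [h0, sub_self, add_zero] at s
    have hb : b' - b = -(a' - a) := by rw [← hbb']; abel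
    rw [hb, mul_neg] at s
    calc x * (a' - a) = x * (a' - a) + (-(x * (a' - a)) + (a' - a) * x) := by
          rw [s, add_zero]
      _ = (a' - a) * x := by abel
  have hcC : a' - a ∈ Set.center R :=
    Semigroup.mem_center_iff.mpr fun g => hcent g
  have ha' : a' = a + (a' - a) := by abel
  have hb' : b' = b - (a' - a) := by rw [← hbb']; abel
  have e3 : (a' - a) * b - a * (a' - a) - (a' - a) * (a' - a) = 0 := by
    have e : a * b = (a + (a' - a)) * (b - (a' - a)) := by rw [← ha', ← hb']; exact h0
    have e2 : (a + (a' - a)) * (b - (a' - a))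
        = a * b - a * (a' - a) + (a' - a) * b - (a' - a) * (a' - a) := by noncomm_ring
    have e4 := e.trans e2
    calc (a' - a) * b - a * (a' - a) - (a' - a) * (a' - a)
        = (a * b - a * (a' - a) + (a' - a) * b - (a' - a) * (a' - a)) - a * b := by abel
      _ = a * b - a * b := by rw [← e4]
      _ = 0 := sub_self _
  have key : (a' - a) * (b - a - (a' - a)) = 0 := by
    calc (a' - a) * (b - a - (a' - a))
        = (a' - a) * b - (a' - a) * a - (a' - a) * (a' - a) := by noncomm_ring
      _ = (a' - a) * b - a * (a' - a) - (a' - a) * (a' - a) := by rw [← hcent a]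
      _ = 0 := e3
  constructor
  · by_cases hc0 : a' - a = 0
    · left
      constructor
      · rw [ha', hc0, add_zero]
      · rw [hb', hc0, sub_zero]
    · right
      obtain ⟨d, hdC, hcd, hdc⟩ := hC _ hcC hc0
      have hba : b - a - (a' - a) = 0 := by
        have : d * ((a' - a) * (b - a - (a' - a))) = 0 := by rw [key, mul_zero]
        rwa [← mul_assoc, hdc, one_mul] at this
      have hcba : a' - a = b - a := by
        calc a' - a = (b - a) - (b - a - (a' - a)) := by abel
          _ = b - a := by rw [hba, sub_zero]
      refine ⟨?_, ?_, ?_⟩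
      · have hneg : a - b = -(a' - a) := by rw [hcba]; abel
        rw [hneg]
        exact Semigroup.mem_center_iff.mpr fun g => by
          have hg := hcent g
          calc g * -(a' - a) = -(g * (a' - a)) := by rw [mul_neg]
            _ = -((a' - a) * g) := by rw [hg]
            _ = -(a' - a) * g := by rw [neg_mul]
      · rw [ha', hcba]; abel
      · rw [hb', hcba]; abel
  · intro hab x
    have hcab : ∀ g : R, (a - b) * g = g * (a - b) :=
      fun g => (Semigroup.mem_center_iff.mp hab g).symm
    have hab2 : a * b = b * a := by
      have hb := hcab b
      calc a * b = (a - b) * b + b * b := by noncomm_ring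
        _ = b * (a - b) + b * b := by rw [hb]
        _ = b * a := by noncomm_ring
    have hx : x * (a - b) = (a - b) * x := (hcab x).symm
    calc (x - a) * (x - b)
        = (x - b) * (x - a) + (x * (a - b) - (a - b) * x) + (a * b - b * a) := by
          noncomm_ring
      _ = (x - b) * (x - a) := by rw [hx, hab2]; abel
end

section
/- Let F be a field, A a unital associative F-algebra, and a, b ∈ A spectrally disjoint, i.e., there exists f ∈ F[X] with f(a) = 1 and f(b) = 0. Then for every c ∈ A the equation a·x − x·b = c has a unique solution x ∈ A. -/
open Finset Polynomial

private lemma tele16 {A : Type*} [Ring A] (a b y : A) (n : ℕ) :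
    ∑ j ∈ Finset.range n, (a^(j+1) * y * b^(n-1-j) - a^j * y * b^(n-j)) =
      a^n * y - y * b^n := by
  have h := Finset.sum_range_sub (fun k => a ^ k * y * b ^ (n - k)) n
  simp only [pow_zero, one_mul, Nat.sub_zero, Nat.sub_self, mul_one] at h
  rw [← h]
  refine Finset.sum_congr rfl fun j _ => ?_
  have : n - 1 - j = n - (j + 1) := by omega
  rw [this]

/-- If `a, b` are spectrally disjoint elements of a unital associative
`F`-algebra `A` (i.e. `f(a) = 1` and `f(b) = 0` for some polynomial `f ∈ F[X]`), then for
every `c ∈ A` the Sylvester equation `a·x − x·b = c` has a unique solution `x ∈ A`. -/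
theorem stmt16 {F A : Type*} [Field F] [Ring A] [Algebra F A] (a b : A)
    (hdisj : ∃ f : Polynomial F, Polynomial.aeval a f = 1 ∧ Polynomial.aeval b f = 0) :
    ∀ c : A, ∃! x : A, a * x - x * b = c := by
  obtain ⟨f, hfa, hfb⟩ := hdisj
  set N := f.natDegree + 1 with hN
  set S : A → A := fun y =>
    ∑ i ∈ Finset.range N, f.coeff i • ∑ j ∈ Finset.range i, a^j * y * b^(i-1-j) with hS
  have key : ∀ y : A, ∑ i ∈ Finset.range N, f.coeff i • (a^i * y - y * b^i) = y := by
    intro y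
    have ha : Polynomial.aeval a f = ∑ i ∈ Finset.range N, f.coeff i • a^i :=
      Polynomial.aeval_eq_sum_range a
    have hb : Polynomial.aeval b f = ∑ i ∈ Finset.range N, f.coeff i • b^i :=
      Polynomial.aeval_eq_sum_range b
    have h2 : ∑ i ∈ Finset.range N, f.coeff i • (a^i * y - y * b^i)
        = (Polynomial.aeval a f) * y - y * (Polynomial.aeval b f) := by
      rw [ha, hb, Finset.sum_mul, Finset.mul_sum, ← Finset.sum_sub_distrib]
      refine Finset.sum_congr rfl fun i _ => ?_
      rw [smul_sub, smul_mul_assoc, mul_smul_comm]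
    rw [h2, hfa, hfb, one_mul, mul_zero, sub_zero]
  have claim1 : ∀ y : A, a * S y - S y * b = y := by
    intro y
    have h0 : a * S y - S y * b
        = ∑ i ∈ Finset.range N, f.coeff i • (a^i * y - y * b^i) := by
      rw [hS]
      simp only [Finset.mul_sum, Finset.sum_mul, ← Finset.sum_sub_distrib,
        mul_smul_comm, smul_mul_assoc, ← smul_sub]
      refine Finset.sum_congr rfl fun i _ => ?_
      congr 1
      rw [← tele16 a b y i]
      refine Finset.sum_congr rfl fun j hj => ?_
      rw [Finset.mem_range] at hj
      have h2 : b^(i-j) = b^(i-1-j) * b := by rw [← pow_succ]; congr 1; omega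
      rw [pow_succ', h2]
      noncomm_ring
    rw [h0, key]
  have claim2 : ∀ x : A, S (a * x - x * b) = x := by
    intro x
    have h0 : S (a * x - x * b)
        = ∑ i ∈ Finset.range N, f.coeff i • (a^i * x - x * b^i) := by
      rw [hS]
      refine Finset.sum_congr rfl fun i _ => ?_
      congr 1
      rw [← tele16 a b x i]
      refine Finset.sum_congr rfl fun j hj => ?_
      rw [Finset.mem_range] at hj
      have h2 : b^(i-j) = b * b^(i-1-j) := by rw [← pow_succ']; congr 1; omega
      rw [pow_succ, h2]
      noncomm_ring
    rw [h0, key]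
  intro c
  exact ⟨S c, claim1 c, fun x hx => by rw [← claim2 x, hx]⟩
end

section
/- Let F be a field, A a unital associative F-algebra, and a, b ∈ A. Suppose a·b = b·a and a, b are spectrally disjoint, i.e., there exists f ∈ F[X] with f(a) = 1 and f(b) = 0. Then a − b is a unit in A. -/
open Finset Polynomial in
/-- If `a, b` are commuting, spectrally disjoint elements of a unital
associative `F`-algebra (i.e. `a·b = b·a` and `f(a) = 1`, `f(b) = 0` for some `f ∈ F[X]`),
then `a − b` is a unit. -/
theorem stmt17 {F A : Type*} [Field F] [Ring A] [Algebra F A] (a b : A)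
    (hcomm : a * b = b * a)
    (hdisj : ∃ f : Polynomial F, Polynomial.aeval a f = 1 ∧ Polynomial.aeval b f = 0) :
    IsUnit (a - b) := by
  obtain ⟨f, hfa, hfb⟩ := hdisj
  have hC : Commute a b := hcomm
  set N := f.natDegree + 1 with hN
  set g : A := ∑ i ∈ range N, f.coeff i • (∑ j ∈ range i, a ^ j * b ^ (i - 1 - j)) with hg
  have hsum : ∑ i ∈ range N, f.coeff i • (a ^ i - b ^ i) = 1 := by
    have ha' : Polynomial.aeval a f = ∑ i ∈ range N, f.coeff i • a ^ i :=
      Polynomial.aeval_eq_sum_range a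
    have hb' : Polynomial.aeval b f = ∑ i ∈ range N, f.coeff i • b ^ i :=
      Polynomial.aeval_eq_sum_range b
    calc ∑ i ∈ range N, f.coeff i • (a ^ i - b ^ i)
        = (∑ i ∈ range N, f.coeff i • a ^ i) - ∑ i ∈ range N, f.coeff i • b ^ i := by
          rw [← Finset.sum_sub_distrib]
          exact Finset.sum_congr rfl fun i _ => smul_sub _ _ _
      _ = Polynomial.aeval a f - Polynomial.aeval b f := by rw [ha', hb']
      _ = 1 := by rw [hfa, hfb, sub_zero]
  have h1 : (a - b) * g = 1 := by
    rw [hg, Finset.mul_sum]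
    calc ∑ i ∈ range N, (a - b) * f.coeff i • (∑ j ∈ range i, a ^ j * b ^ (i - 1 - j))
        = ∑ i ∈ range N, f.coeff i • (a ^ i - b ^ i) := by
          refine Finset.sum_congr rfl fun i _ => ?_
          rw [mul_smul_comm, hC.mul_geom_sum₂]
      _ = 1 := hsum
  have h2 : g * (a - b) = 1 := by
    rw [hg, Finset.sum_mul]
    calc ∑ i ∈ range N, f.coeff i • (∑ j ∈ range i, a ^ j * b ^ (i - 1 - j)) * (a - b)
        = ∑ i ∈ range N, f.coeff i • (a ^ i - b ^ i) := by
          refine Finset.sum_congr rfl fun i _ => ?_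
          rw [smul_mul_assoc, hC.geom_sum₂_mul]
      _ = 1 := hsum
  exact ⟨⟨a - b, g, h1, h2⟩, rfl⟩
end

section
/- Let F be a field, n ≥ 1, and A ∈ M(n, F). Let L : M(n, F) → M(n, F) be the F-linear map L(X) = A·X − X·A. Then the kernel of L has dimension at least n over F (equivalently, the space of matrices C for which A·X − X·A = C is solvable has dimension at most n² − n). Moreover, if A is the elementary Jordan matrix J_{n,λ} (with entries λ on the diagonal, 1 on the superdiagonal, and 0 elsewhere) for some λ ∈ F, then the kernel of L has dimension exactly n. -/
open Polynomial Module DirectSum LinearMap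


-- the multiplication embedding on a finite direct sum of quotients
noncomputable def mulEmb {F : Type*} [Field F] {ι : Type*} [Fintype ι] [DecidableEq ι]
    (q : ι → F[X]) :
    (⨁ i : ι, F[X] ⧸ (Submodule.span F[X] {q i})) →ₗ[F[X]]
      Module.End F[X] (⨁ i : ι, F[X] ⧸ (Submodule.span F[X] {q i})) :=
  ∑ i : ι,
    (LinearMap.llcomp F[X] _ _ _ (DirectSum.lof F[X] ι _ i)) ∘ₗ
      (LinearMap.lcomp F[X] _ (DirectSum.component F[X] ι _ i)) ∘ₗ
        (LinearMap.mul F[X] (F[X] ⧸ (Submodule.span F[X] {q i}))) ∘ₗ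
          (DirectSum.component F[X] ι _ i)

lemma mulEmb_injective {F : Type*} [Field F] {ι : Type*} [Fintype ι] [DecidableEq ι]
    (q : ι → F[X]) : Function.Injective (mulEmb q) := by
  have key : ∀ x, (mulEmb q x) (∑ j : ι, DirectSum.lof F[X] ι _ j 1) = x := by
    intro x
    rw [mulEmb]
    simp only [LinearMap.sum_apply, LinearMap.comp_apply, llcomp_apply, lcomp_apply,
      LinearMap.mul_apply']
    have hcomp : ∀ i : ι, (DirectSum.component F[X] ι _ i)
        (∑ j : ι, DirectSum.lof F[X] ι _ j (1 : F[X] ⧸ (Submodule.span F[X] {q j}))) = 1 := by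
      intro i
      rw [map_sum]
      rw [Finset.sum_eq_single i]
      · simp [DirectSum.component.lof_self]
      · intro j _ hj
        rw [DirectSum.component.of, dif_neg hj]
      · intro h; exact absurd (Finset.mem_univ i) h
    simp only [hcomp, mul_one]
    exact DirectSum.sum_univ_of x
  intro x y hxy
  rw [← key x, ← key y, hxy]

set_option maxHeartbeats 1000000 in
lemma lower_bound {F : Type*} [Field F] (n : ℕ) (A : Matrix (Fin n) (Fin n) F) :
    n ≤ Module.finrank F
        (LinearMap.ker (LinearMap.mulLeft F A - LinearMap.mulRight F A)) := by
  classical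
  set φ : (Fin n → F) →ₗ[F] (Fin n → F) := Matrix.mulVecLin A with hφ
  have hphi : aeval φ A.charpoly = 0 := by
    have h0 : Matrix.mulVecLin (n := Fin n) (R := F) A = (Matrix.toLinAlgEquiv').toAlgHom A := rfl
    rw [hφ, h0, Polynomial.aeval_algHom_apply]
    simp [Matrix.aeval_self_charpoly]
  have htors : Module.IsTorsion F[X] (Module.AEval' φ) := by
    intro v
    refine ⟨⟨A.charpoly, mem_nonZeroDivisors_of_ne_zero (Matrix.charpoly_monic A).ne_zero⟩, ?_⟩
    show (A.charpoly : F[X]) • v = 0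
    have h3 := Module.AEval.of_aeval_smul (R := F) (M := Fin n → F) φ A.charpoly
      ((Module.AEval.of F (Fin n → F) φ).symm v)
    rw [LinearEquiv.apply_symm_apply] at h3
    rw [← h3, hphi]; simp
  obtain ⟨ι, hfin, p, hp, e, ⟨eqv⟩⟩ := Module.equiv_directSum_of_isTorsion htors
  haveI := hfin
  set q : ι → F[X] := fun i => p i ^ e i with hq
  set N := ⨁ i : ι, F[X] ⧸ (Submodule.span F[X] {q i}) with hN
  have eqv' : Module.AEval' φ ≃ₗ[F[X]] N := eqv
  let ofE : (Fin n → F) ≃ₗ[F] Module.AEval' φ := Module.AEval.of F (Fin n → F) φ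
  let W : N → (Module.AEval' φ →ₗ[F[X]] Module.AEval' φ) := fun x =>
    eqv'.symm.toLinearMap ∘ₗ (mulEmb q x) ∘ₗ eqv'.toLinearMap
  let T : N → ((Fin n → F) →ₗ[F] (Fin n → F)) := fun x =>
    ofE.symm.toLinearMap ∘ₗ ((W x).restrictScalars F) ∘ₗ ofE.toLinearMap
  have hT_apply : ∀ x m, T x m = ofE.symm ((W x) (ofE m)) := fun _ _ => rfl
  -- T commutes with φ
  have hTφ : ∀ x, φ ∘ₗ T x = T x ∘ₗ φ := by
    intro x
    refine LinearMap.ext fun m => ?_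
    show φ (ofE.symm ((W x) (ofE m))) = ofE.symm ((W x) (ofE (φ m)))
    have h1 : ofE (φ m) = (X : F[X]) • ofE m := (Module.AEval.X_smul_of φ m).symm
    rw [h1, map_smul, Module.AEval.of_symm_X_smul]
    rfl
  have hker : ∀ x : N, LinearMap.toMatrix' (T x) ∈
      LinearMap.ker (LinearMap.mulLeft F A - LinearMap.mulRight F A) := by
    intro x
    rw [LinearMap.mem_ker, LinearMap.sub_apply, sub_eq_zero, LinearMap.mulLeft_apply,
      LinearMap.mulRight_apply]
    have h2 : A = LinearMap.toMatrix' φ := by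
      rw [hφ, ← Matrix.toLin'_apply', LinearMap.toMatrix'_toLin']
    rw [h2, ← LinearMap.toMatrix'_comp, ← LinearMap.toMatrix'_comp, hTφ]
  have hWadd : ∀ x y, W (x + y) = W x + W y := by
    intro x y
    simp only [W, map_add, LinearMap.add_comp, LinearMap.comp_add]
  have hTadd : ∀ x y, T (x + y) = T x + T y := by
    intro x y
    simp only [T, hWadd, LinearMap.restrictScalars_add, LinearMap.add_comp, LinearMap.comp_add]
  have hWsmul : ∀ (c : F) x, W (c • x) = (algebraMap F F[X] c) • W x := by
    intro c x
    simp only [W]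
    rw [← algebraMap_smul F[X] c x, map_smul]
    simp only [LinearMap.comp_smul, LinearMap.smul_comp]
  have hTsmul : ∀ (c : F) x, T (c • x) = c • T x := by
    intro c x
    refine LinearMap.ext fun m => ?_
    rw [hT_apply, hWsmul, LinearMap.smul_apply, algebraMap_smul, map_smul]
    rfl
  let Ψ : N →ₗ[F] (LinearMap.ker (LinearMap.mulLeft F A - LinearMap.mulRight F A)) :=
    { toFun := fun x => ⟨LinearMap.toMatrix' (T x), hker x⟩
      map_add' := fun x y => Subtype.ext (by
        show LinearMap.toMatrix' (T (x + y))
          = LinearMap.toMatrix' (T x) + LinearMap.toMatrix' (T y)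
        rw [hTadd]; exact map_add _ _ _)
      map_smul' := fun c x => Subtype.ext (by
        show LinearMap.toMatrix' (T (c • x)) = c • LinearMap.toMatrix' (T x)
        rw [hTsmul]; exact map_smul _ _ _) }
  have hΨinj : Function.Injective Ψ := by
    intro x y hxy
    have h4 : T x = T y :=
      LinearMap.toMatrix'.injective (congrArg Subtype.val hxy)
    have h5 : W x = W y := by
      refine LinearMap.ext fun u => ?_
      have := congrArg (fun f => f ((ofE.symm : Module.AEval' φ →ₗ[F] (Fin n → F)) u)) h4
      simp only [hT_apply, LinearEquiv.apply_symm_apply] at this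
      exact ofE.symm.injective this
    apply mulEmb_injective q
    refine LinearMap.ext fun v => ?_
    have := congrArg (fun f => eqv' (f (eqv'.symm v))) h5
    simpa only [W, LinearMap.comp_apply, LinearEquiv.coe_coe, LinearEquiv.apply_symm_apply]
      using this
  have hNrank : Module.finrank F N = n := by
    have e1 : (Fin n → F) ≃ₗ[F] N := (ofE.trans (eqv'.restrictScalars F))
    rw [← e1.finrank_eq, Module.finrank_pi]
    simp
  calc n = Module.finrank F N := hNrank.symm
    _ ≤ _ := LinearMap.finrank_le_finrank_of_injective hΨinj

/-- The elementary Jordan matrix `J_{n,λ}`: entries `λ` on the diagonal, `1` on the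
superdiagonal, and `0` elsewhere. -/
def jordanMatrix {F : Type*} [Field F] (n : ℕ) (l : F) : Matrix (Fin n) (Fin n) F :=
  Matrix.of fun r s => if (s : ℕ) = (r : ℕ) then l else if (s : ℕ) = (r : ℕ) + 1 then 1 else 0

/-- the shift matrix -/
def shiftM {F : Type*} [Field F] (n : ℕ) : Matrix (Fin n) (Fin n) F :=
  Matrix.of fun r s => if (s : ℕ) = (r : ℕ) + 1 then 1 else 0

lemma jordan_eq {F : Type*} [Field F] (n : ℕ) (l : F) :
    jordanMatrix n l = l • (1 : Matrix (Fin n) (Fin n) F) + shiftM n := by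
  ext r s
  simp only [jordanMatrix, shiftM, Matrix.add_apply, Matrix.smul_apply, Matrix.one_apply,
    Matrix.of_apply, smul_eq_mul]
  rcases eq_or_ne (s : ℕ) (r : ℕ) with h | h
  · have : r = s := Fin.ext h.symm
    simp [this, h]
  · have : r ≠ s := fun hc => h (by rw [hc])
    simp [h, this]

lemma shift_mul_apply {F : Type*} [Field F] (n : ℕ) (X : Matrix (Fin n) (Fin n) F)
    (i j : Fin n) :
    ((shiftM (F := F) n) * X) i j = if h : (i : ℕ) + 1 < n then X ⟨(i : ℕ) + 1, h⟩ j else 0 := by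
  rw [Matrix.mul_apply]
  split_ifs with h
  · rw [Finset.sum_eq_single (⟨(i : ℕ) + 1, h⟩ : Fin n)]
    · simp [shiftM]
    · intro k _ hk
      have : (k : ℕ) ≠ (i : ℕ) + 1 := fun hc => hk (Fin.ext hc)
      simp [shiftM, this]
    · simp
  · apply Finset.sum_eq_zero
    intro k _
    have : (k : ℕ) ≠ (i : ℕ) + 1 := by omega
    simp [shiftM, this]

lemma mul_shift_apply {F : Type*} [Field F] (n : ℕ) (X : Matrix (Fin n) (Fin n) F)
    (i j : Fin n) :
    (X * (shiftM (F := F) n)) i j = if h : (j : ℕ) ≠ 0 then X i ⟨(j : ℕ) - 1, by omega⟩ else 0 := by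
  rw [Matrix.mul_apply]
  split_ifs with h
  · rw [Finset.sum_eq_single (⟨(j : ℕ) - 1, by omega⟩ : Fin n)]
    · simp only [shiftM, Matrix.of_apply]
      rw [if_pos (by omega)]
      rw [mul_one]
    · intro k _ hk
      have : (j : ℕ) ≠ (k : ℕ) + 1 := by
        intro hc
        refine hk (Fin.ext ?_)
        show (k : ℕ) = (j : ℕ) - 1
        omega
      simp [shiftM, this]
    · simp
  · apply Finset.sum_eq_zero
    intro k _
    have : (j : ℕ) ≠ (k : ℕ) + 1 := by omega
    simp [shiftM, this]

lemma upper_bound {F : Type*} [Field F] (n : ℕ) (hn : 1 ≤ n) (l : F) :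
    Module.finrank F
      (LinearMap.ker (LinearMap.mulLeft F (jordanMatrix n l)
        - LinearMap.mulRight F (jordanMatrix n l))) ≤ n := by
  classical
  set K := LinearMap.ker (LinearMap.mulLeft F (jordanMatrix n l)
      - LinearMap.mulRight F (jordanMatrix n l)) with hK
  let ρ : K →ₗ[F] (Fin n → F) :=
    { toFun := fun X => fun j => (X : Matrix (Fin n) (Fin n) F) ⟨0, hn⟩ j
      map_add' := fun X Y => rfl
      map_smul' := fun c X => rfl }
  have hρinj : Function.Injective ρ := by
    rw [← LinearMap.ker_eq_bot, LinearMap.ker_eq_bot']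
    intro X hX
    obtain ⟨Xm, hXm⟩ := X
    rw [hK, LinearMap.mem_ker, LinearMap.sub_apply, sub_eq_zero, LinearMap.mulLeft_apply,
      LinearMap.mulRight_apply, jordan_eq] at hXm
    have hcomm : shiftM n * Xm = Xm * shiftM n := by
      have h1 : l • Xm + shiftM n * Xm = l • Xm + Xm * shiftM n := by
        calc l • Xm + shiftM n * Xm = (l • 1 + shiftM n) * Xm := by
              rw [add_mul, Matrix.smul_mul, Matrix.one_mul]
          _ = Xm * (l • 1 + shiftM n) := hXm
          _ = l • Xm + Xm * shiftM n := by
              rw [Matrix.mul_add, Matrix.mul_smul, Matrix.mul_one]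
      exact add_left_cancel h1
    have hrow0 : ∀ j, Xm ⟨0, hn⟩ j = 0 := by
      intro j
      exact congrFun hX j
    -- induction: all rows are zero
    have hrows : ∀ i : ℕ, ∀ hi : i < n, ∀ j, Xm ⟨i, hi⟩ j = 0 := by
      intro i
      induction i with
      | zero => intro hi j; exact hrow0 j
      | succ i ih =>
        intro hi j
        have hi' : i < n := by omega
        have key := congrFun (congrFun hcomm ⟨i, hi'⟩) j
        rw [shift_mul_apply, mul_shift_apply] at key
        rw [dif_pos (show (⟨i, hi'⟩ : Fin n).val + 1 < n from hi)] at key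
        by_cases hj : (j : ℕ) ≠ 0
        · rw [dif_pos hj] at key
          have := ih hi' ⟨(j : ℕ) - 1, by omega⟩
          rw [this] at key
          exact key
        · rw [dif_neg hj] at key
          exact key
    rw [Submodule.mk_eq_zero]
    ext i j
    exact hrows i.val i.isLt j
  calc Module.finrank F K ≤ Module.finrank F (Fin n → F) :=
        LinearMap.finrank_le_finrank_of_injective hρinj
    _ = n := by simp

/-- For `A ∈ M(n, F)` let `L(X) = A·X − X·A` be the commutator map.  Then
`dim ker L ≥ n` (equivalently, the space of `C` for which `A·X − X·A = C` is solvable has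
dimension at most `n² − n`); and if `A` is an elementary Jordan matrix `J_{n,λ}` then
`dim ker L = n`. -/
theorem stmt19 {F : Type*} [Field F] (n : ℕ) (hn : 1 ≤ n)
    (A : Matrix (Fin n) (Fin n) F) :
    n ≤ Module.finrank F
        (LinearMap.ker (LinearMap.mulLeft F A - LinearMap.mulRight F A)) ∧
    (∀ l : F, A = jordanMatrix n l →
      Module.finrank F
        (LinearMap.ker (LinearMap.mulLeft F A - LinearMap.mulRight F A)) = n) := by
  refine ⟨lower_bound n A, ?_⟩
  intro l hl
  subst hl
  exact le_antisymm (upper_bound n hn l) (lower_bound n _)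
end
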